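/- arXiv:2001.00494 — 6 statements merged into one kernel-verified Lean document; each statement's English description precedes it below -/
import Mathlib

section
/- Let n, α, t be complex numbers with t ≠ 0, and set a₀ = n+α, a₁ = −n, a₂ = n, a₃ = 1−n−α. Let q, p be complex numbers with p ≠ 0, p+t ≠ 0 and qp+n ≠ 0, and define x = (q(p+t)+n)/(qp+n), y = (p+t)(qp+n)/t. Define q̄ = 1 − q − a₂/p − a₀/(p+t), assume q̄ ≠ 0 and q̄ ≠ 1, define p̄ = −p − t + (a₁−1)/q̄ + (a₃−1)/(q̄−1), assume q̄p̄ + (n+1) ≠ 0, and define x̄ = (q̄(p̄+t)+(n+1))/(q̄p̄+(n+1)), ȳ = (p̄+t)(q̄p̄+(n+1))/t. Then y ≠ 0, x̄ ≠ 1, and the pair satisfies the Laguerre-weight recurrence: x·x̄ = (y−n)(y−(n+α))/y² and y + ȳ = −((−t+2n+1+α)·x̄ − (2n+1+α))/(x̄−1)². -/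
/-!
Both `x̄` and `y` depend only on the half-step point `(q̄, p)`: with `D = (p + t)(q̄ - 1) + a₀`,
the `q̄`-equation gives `y = -p D / t`, and the `p̄`-equation gives `q̄ p̄ + (n + 1) = -q̄ D / (q̄ - 1)`,
hence `x̄ - 1 = -t (q̄ - 1) / D`. The first recurrence then factors as
`(x y) (x̄ y) = (y - n) (y - n - α)`, with `x y = (p + t)(y - n) / p` and `x̄ y = p (y - n - α) / (p + t)`;
the second is a rational identity in `q̄` and `p` once `p̄` is eliminated.
-/

section
variable {K : Type*} [Field K] {a b t p q x y qb pb xb yb D w : K}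

theorem x_mul_y_eq (ht : t ≠ 0) (hp : p ≠ 0) (hqp : q * p + a ≠ 0)
    (hx : x = (q * (p + t) + a) / (q * p + a)) (hy : y = (p + t) * (q * p + a) / t) :
    x * y = (p + t) * (y - a) / p := by
  subst hx hy
  field_simp
  ring

theorem y_eq_of_qb_eq (hp : p ≠ 0) (hpt : p + t ≠ 0) (hy : y = (p + t) * (q * p + a) / t)
    (hqb : qb = 1 - q - a / p - b / (p + t)) :
    y = -p * ((p + t) * (qb - 1) + b) / t := by
  subst hy hqb
  field_simp
  ring

theorem qb_mul_pb_add_eq_of_pb_eq (hqb0 : qb ≠ 0) (hqb1 : qb - 1 ≠ 0)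
    (hpb : pb = -p - t - a / qb - b / (qb - 1)) :
    qb * pb + a = -qb * ((p + t) * (qb - 1) + b) / (qb - 1) := by
  subst hpb
  field_simp
  ring

theorem xb_sub_one_eq (hqb0 : qb ≠ 0) (hqb1 : qb - 1 ≠ 0) (hD : D ≠ 0)
    (hw : qb * pb + w = -qb * D / (qb - 1))
    (hxb : xb = (qb * (pb + t) + w) / (qb * pb + w)) :
    xb - 1 = -t * (qb - 1) / D := by
  rw [hxb, show qb * (pb + t) + w = qb * pb + w + qb * t by ring, hw]
  field_simp
  ring

theorem xb_mul_y_eq (ht : t ≠ 0) (hpt : p + t ≠ 0) (hD0 : D ≠ 0)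
    (hD : D = (p + t) * (qb - 1) + b) (hy : y = -p * D / t)
    (hxb : xb - 1 = -t * (qb - 1) / D) :
    xb * y = p * (y - b) / (p + t) := by
  rw [sub_eq_iff_eq_add] at hxb
  rw [hxb, hy]
  field_simp
  rw [hD]
  ring

theorem y_add_yb_eq (hqb0 : qb ≠ 0) (hqb1 : qb - 1 ≠ 0) (hD0 : D ≠ 0)
    (hD : D = (p + t) * (qb - 1) + b) (hy : y = -p * D / t)
    (hpb : pb = -p - t - a / qb - b / (qb - 1)) (hw : qb * pb + a = -qb * D / (qb - 1))
    (hxb : xb - 1 = -t * (qb - 1) / D) (hyb : yb = (pb + t) * (qb * pb + a) / t) :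
    y + yb = -((-t + a + b) * xb - (a + b)) / (xb - 1) ^ 2 := by
  rw [show -((-t + a + b) * xb - (a + b)) = t - (-t + a + b) * (xb - 1) by ring,
    hxb, hy, hyb, hw, hpb]
  field_simp
  rw [hD]
  ring

end

/-- The change of variables of Theorem 1 (Hu–Dzhamay–Chen) conjugates one step of
the standard discrete Painlevé equation on the `D₅⁽¹⁾` surface (KNY form), with root variables
`a₀ = n+α`, `a₁ = −n`, `a₂ = n`, `a₃ = 1−n−α`, to one step of the Laguerre-weight recurrence of
Lyu–Chen. -/
theorem laguerre_recurrence_from_dPainleve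
    (n α t q p x y qb pb xb yb a0 a1 a2 a3 : ℂ)
    (ht : t ≠ 0)
    (ha0 : a0 = n + α) (ha1 : a1 = -n) (ha2 : a2 = n) (ha3 : a3 = 1 - n - α)
    (hp : p ≠ 0) (hpt : p + t ≠ 0) (hqp : q * p + n ≠ 0)
    (hx : x = (q * (p + t) + n) / (q * p + n))
    (hy : y = (p + t) * (q * p + n) / t)
    (hqb : qb = 1 - q - a2 / p - a0 / (p + t))
    (hqb0 : qb ≠ 0) (hqb1 : qb ≠ 1)
    (hpb : pb = -p - t + (a1 - 1) / qb + (a3 - 1) / (qb - 1))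
    (hqpb : qb * pb + (n + 1) ≠ 0)
    (hxb : xb = (qb * (pb + t) + (n + 1)) / (qb * pb + (n + 1)))
    (hyb : yb = (pb + t) * (qb * pb + (n + 1)) / t) :
    y ≠ 0 ∧ xb ≠ 1 ∧
      x * xb = (y - n) * (y - (n + α)) / y ^ 2 ∧
      y + yb = -((-t + 2 * n + 1 + α) * xb - (2 * n + 1 + α)) / (xb - 1) ^ 2 := by
  subst a0 a1 a2 a3
  have hqb1' : qb - 1 ≠ 0 := sub_ne_zero.mpr hqb1
  have hpb' : pb = -p - t - (n + 1) / qb - (n + α) / (qb - 1) := by rw [hpb]; ring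
  set D := (p + t) * (qb - 1) + (n + α) with hD
  have hy' : y = -p * D / t := y_eq_of_qb_eq hp hpt hy hqb
  have hw : qb * pb + (n + 1) = -qb * D / (qb - 1) := qb_mul_pb_add_eq_of_pb_eq hqb0 hqb1' hpb'
  have hD0 : D ≠ 0 := by
    rintro h
    apply hqpb
    rw [hw, h, mul_zero, zero_div]
  have hxb' : xb - 1 = -t * (qb - 1) / D := xb_sub_one_eq hqb0 hqb1' hD0 hw hxb
  have hy0 : y ≠ 0 := hy ▸ div_ne_zero (mul_ne_zero hpt hqp) ht
  refine ⟨hy0, ?_, ?_, ?_⟩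
  · rw [← sub_ne_zero, hxb']
    exact div_ne_zero (mul_ne_zero (neg_ne_zero.mpr ht) hqb1') hD0
  · rw [eq_div_iff (pow_ne_zero 2 hy0)]
    calc x * xb * y ^ 2 = (x * y) * (xb * y) := by ring
      _ = (y - n) * (y - (n + α)) := by
        rw [x_mul_y_eq ht hp hqp hx hy, xb_mul_y_eq ht hpt hD0 hD hy' hxb']
        field_simp
  · rw [show -t + 2 * n + 1 + α = -t + (n + 1) + (n + α) by ring,
      show 2 * n + 1 + α = (n + 1) + (n + α) by ring]
    exact y_add_yb_eq hqb0 hqb1' hD0 hD hy' hpb' hw hxb' hyb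
end

section
/- Let n, t be complex numbers with t ≠ 0. (i) If q, p are complex numbers with qp+n ≠ 0 and q(p+t)+n ≠ 0, and x = (q(p+t)+n)/(qp+n), y = (p+t)(qp+n)/t, then x ≠ 0, (x−1)y+n ≠ 0, and (x−1)·((x−1)y+n)/(tx) = q and t(y−n)/((x−1)y+n) = p. (ii) Conversely, if x, y are complex numbers with x ≠ 0 and (x−1)y+n ≠ 0, and q = (x−1)·((x−1)y+n)/(tx), p = t(y−n)/((x−1)y+n), then qp+n ≠ 0, q(p+t)+n ≠ 0, and (q(p+t)+n)/(qp+n) = x and (p+t)(qp+n)/t = y. -/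
/-!
Write `A = q(p+t)+n` and `B = qp+n`. The forward map gives `x - 1 = qt/B`, hence `(x-1)y = q(p+t)`
and `(x-1)y + n = A`. Conversely, with `C = (x-1)y+n` the inverse map gives `qp + n = C/x` and
`q(p+t) + n = C`. These identities show that each nondegeneracy condition is carried to the other,
and with the denominators known, both compositions reduce to identities of rational functions.
-/

section LaguerreCoordinates

variable {K : Type*} [Field K] {n t : K}

theorem laguerre_sub_one_mul_add_eq {q p : K} (ht : t ≠ 0) (hB : q * p + n ≠ 0) :
    ((q * (p + t) + n) / (q * p + n) - 1) * ((p + t) * (q * p + n) / t) + n = q * (p + t) + n := by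
  field_simp
  ring

theorem laguerre_mul_add_eq_div {x y : K} (ht : t ≠ 0) (hx : x ≠ 0) (hC : (x - 1) * y + n ≠ 0) :
    (x - 1) * ((x - 1) * y + n) / (t * x) * (t * (y - n) / ((x - 1) * y + n)) + n =
      ((x - 1) * y + n) / x := by
  field_simp
  ring

theorem laguerre_div_add_eq {x y : K} (hC : (x - 1) * y + n ≠ 0) :
    t * (y - n) / ((x - 1) * y + n) + t = t * x * y / ((x - 1) * y + n) := by
  rw [div_add' _ _ _ hC]
  ring

theorem laguerre_mul_add_add_eq {x y : K} (ht : t ≠ 0) (hx : x ≠ 0) (hC : (x - 1) * y + n ≠ 0) :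
    (x - 1) * ((x - 1) * y + n) / (t * x) * (t * (y - n) / ((x - 1) * y + n) + t) + n =
      (x - 1) * y + n := by
  rw [laguerre_div_add_eq hC]
  field_simp

end LaguerreCoordinates

/-- The change of variables `x = (q(p+t)+n)/(qp+n)`, `y = (p+t)(qp+n)/t` between
the Laguerre-weight recurrence coordinates `(x,y)` and the standard discrete Painlevé coordinates
`(q,p)` on the `D₅⁽¹⁾` surface, and its inverse `q = (x−1)((x−1)y+n)/(tx)`,
`p = t(y−n)/((x−1)y+n)`, are mutually inverse wherever defined. -/
theorem laguerre_coordinate_change_inverse (n t : ℂ) (ht : t ≠ 0) :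
    (∀ q p x y : ℂ, q * p + n ≠ 0 → q * (p + t) + n ≠ 0 →
      x = (q * (p + t) + n) / (q * p + n) → y = (p + t) * (q * p + n) / t →
      x ≠ 0 ∧ (x - 1) * y + n ≠ 0 ∧
        (x - 1) * ((x - 1) * y + n) / (t * x) = q ∧
        t * (y - n) / ((x - 1) * y + n) = p) ∧
    (∀ x y q p : ℂ, x ≠ 0 → (x - 1) * y + n ≠ 0 →
      q = (x - 1) * ((x - 1) * y + n) / (t * x) → p = t * (y - n) / ((x - 1) * y + n) →
      q * p + n ≠ 0 ∧ q * (p + t) + n ≠ 0 ∧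
        (q * (p + t) + n) / (q * p + n) = x ∧
        (p + t) * (q * p + n) / t = y) := by
  refine ⟨fun q p x y hB hA hx hy => ?_, fun x y q p hx hC hq hp => ?_⟩
  · subst hx hy
    have hC := laguerre_sub_one_mul_add_eq ht hB
    refine ⟨div_ne_zero hA hB, by rwa [hC], ?_, ?_⟩
    · rw [hC]
      field_simp
      ring
    · rw [hC, div_eq_iff hA]
      field_simp
      ring
  · subst hq hp
    have hB := laguerre_mul_add_eq_div ht hx hC
    have hA := laguerre_mul_add_add_eq ht hx hC
    refine ⟨by rw [hB]; exact div_ne_zero hC hx, by rwa [hA], ?_, ?_⟩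
    · rw [hA, hB]
      field_simp
    · rw [hB, laguerre_div_add_eq hC]
      generalize (x - 1) * y + n = C at hC ⊢
      field_simp
end

section
/- The ℤ-linear map ψ⋆ : Pic → Pic preserves the intersection form: for all C, C′ ∈ Pic, ψ⋆(C) • ψ⋆(C′) = C • C′. -/
/-- The Picard lattice `Pic` of the blown-up surface: the free `ℤ`-module of rank 10 with basis
`H_x, H_y, F₁, …, F₈`. -/
abbrev Pic : Type := Fin 10 → ℤ

/-- The `i`-th basis vector of `Pic`. -/
def bv (i : Fin 10) : Pic := fun j => if j = i then 1 else 0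

/-- The class `H_x` of a vertical line. -/
def Hx : Pic := bv 0

/-- The class `H_y` of a horizontal line. -/
def Hy : Pic := bv 1

/-- The class `F (k)` of the exceptional divisor `F_{k+1}` (so `F 0 = F₁`, …, `F 7 = F₈`). -/
def F (k : Fin 8) : Pic := bv ⟨k.val + 2, by omega⟩

/-- The intersection form on `Pic`: `H_x•H_x = H_y•H_y = 0`, `H_x•H_y = 1`,
`H_x•F_i = H_y•F_i = 0`, `F_i•F_j = −δ_{ij}`. -/
def inter (v w : Pic) : ℤ :=
  v 0 * w 1 + v 1 * w 0 - ∑ k : Fin 8, v ⟨k.val + 2, by omega⟩ * w ⟨k.val + 2, by omega⟩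

/-! The intersection form is bilinear and `ψ⋆` is linear, so it suffices to compare the Gram
matrices: the pairwise intersections of the ten images `ψ⋆(H_x), ψ⋆(H_y), ψ⋆(F₁), …, ψ⋆(F₈)`
must equal those of the basis, a finite computation. -/

theorem LinearMap.BilinForm.apply_map_map_of_basis {ι R M N : Type*} [CommSemiring R]
    [AddCommMonoid M] [Module R M] [AddCommMonoid N] [Module R N] (B : LinearMap.BilinForm R M)
    (B' : LinearMap.BilinForm R N) (b : Module.Basis ι R M) (f : M →ₗ[R] N)
    (h : ∀ i j, B' (f (b i)) (f (b j)) = B (b i) (b j)) (x y : M) :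
    B' (f x) (f y) = B x y :=
  LinearMap.congr_fun₂ (LinearMap.ext_basis b b (B := B'.compl₁₂ f f) h) x y

def interForm : LinearMap.BilinForm ℤ Pic :=
  LinearMap.mk₂ ℤ inter
    (fun _ _ _ => by simp only [inter, Pi.add_apply, add_mul, Finset.sum_add_distrib]; ring)
    (fun _ _ _ => by simp only [inter, Pi.smul_apply, smul_eq_mul, mul_sub, Finset.mul_sum]; ring_nf)
    (fun _ _ _ => by simp only [inter, Pi.add_apply, mul_add, Finset.sum_add_distrib]; ring)
    (fun _ _ _ => by simp only [inter, Pi.smul_apply, smul_eq_mul, mul_sub, Finset.mul_sum]; ring_nf)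

theorem interForm_apply (v w : Pic) : interForm v w = inter v w := rfl

theorem bv_eq_basisFun (i : Fin 10) : bv i = Pi.basisFun ℤ (Fin 10) i := by
  funext j
  simp [bv, Pi.single_apply]

def psiImage : Fin 10 → Pic :=
  ![(5 : ℤ) • Hx + (2 : ℤ) • Hy - F 0 - F 1 - (2 : ℤ) • (F 2 + F 3 + F 4 + F 5) - F 6 - F 7,
    (2 : ℤ) • Hx + Hy - (F 2 + F 3 + F 4 + F 5),
    (2 : ℤ) • Hx + Hy - F 1 - (F 2 + F 3 + F 4 + F 5),
    (2 : ℤ) • Hx + Hy - F 0 - (F 2 + F 3 + F 4 + F 5),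
    Hx - F 5, Hx - F 4, Hx - F 3, Hx - F 2,
    (2 : ℤ) • Hx + Hy - (F 2 + F 3 + F 4 + F 5) - F 7,
    (2 : ℤ) • Hx + Hy - (F 2 + F 3 + F 4 + F 5) - F 6]

theorem inter_psiImage_psiImage (i j : Fin 10) :
    inter (psiImage i) (psiImage j) = inter (bv i) (bv j) := by
  revert i j
  decide

/-- The `ℤ`-linear map `ψ⋆ : Pic → Pic` induced by the composed forward map of
the Laguerre-weight recurrence (defined on the basis as in Lemma 3 of the paper) preserves the
intersection form. -/
theorem psiStar_preserves_intersection (ψ : Pic →ₗ[ℤ] Pic)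
    (hHx : ψ Hx = (5 : ℤ) • Hx + (2 : ℤ) • Hy - F 0 - F 1
      - (2 : ℤ) • (F 2 + F 3 + F 4 + F 5) - F 6 - F 7)
    (hHy : ψ Hy = (2 : ℤ) • Hx + Hy - (F 2 + F 3 + F 4 + F 5))
    (hF1 : ψ (F 0) = (2 : ℤ) • Hx + Hy - F 1 - (F 2 + F 3 + F 4 + F 5))
    (hF2 : ψ (F 1) = (2 : ℤ) • Hx + Hy - F 0 - (F 2 + F 3 + F 4 + F 5))
    (hF3 : ψ (F 2) = Hx - F 5)
    (hF4 : ψ (F 3) = Hx - F 4)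
    (hF5 : ψ (F 4) = Hx - F 3)
    (hF6 : ψ (F 5) = Hx - F 2)
    (hF7 : ψ (F 6) = (2 : ℤ) • Hx + Hy - (F 2 + F 3 + F 4 + F 5) - F 7)
    (hF8 : ψ (F 7) = (2 : ℤ) • Hx + Hy - (F 2 + F 3 + F 4 + F 5) - F 6) :
    ∀ C C' : Pic, inter (ψ C) (ψ C') = inter C C' := by
  have hψ : ∀ i, ψ (bv i) = psiImage i := by
    intro i
    fin_cases i
    exacts [hHx, hHy, hF1, hF2, hF3, hF4, hF5, hF6, hF7, hF8]
  refine interForm.apply_map_map_of_basis interForm (Pi.basisFun ℤ (Fin 10)) ψ fun i j => ?_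
  simpa only [interForm_apply, ← bv_eq_basisFun, hψ] using inter_psiImage_psiImage i j
end

section
/- Each of the four birational maps w₀, w₁, w₂, w₃ is an involution wherever defined: for all complex (a₀,a₁,a₂,a₃;t;q,p), (i) if p+t ≠ 0 then w₀(w₀(a₀,a₁,a₂,a₃;t;q,p)) = (a₀,a₁,a₂,a₃;t;q,p); (ii) if q ≠ 0 then w₁∘w₁ is the identity at this point; (iii) if p ≠ 0 then w₂∘w₂ is the identity at this point; (iv) if q ≠ 1 then w₃∘w₃ is the identity at this point. -/
/-- A point of the family of `D₅⁽¹⁾` Sakai surfaces: root variables `(a₀,a₁,a₂,a₃)`, the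
independent parameter `t`, and the coordinates `(q,p)`. -/
structure PV where
  a0 : ℂ
  a1 : ℂ
  a2 : ℂ
  a3 : ℂ
  t : ℂ
  q : ℂ
  p : ℂ

/-- The Bäcklund transformation `w₀`, the reflection in the symmetry root `α₀`. -/
noncomputable def w0 (s : PV) : PV :=
  ⟨-s.a0, s.a0 + s.a1, s.a2, s.a0 + s.a3, s.t, s.q + s.a0 / (s.p + s.t), s.p⟩

/-- The Bäcklund transformation `w₁`, the reflection in the symmetry root `α₁`. -/
noncomputable def w1 (s : PV) : PV :=
  ⟨s.a0 + s.a1, -s.a1, s.a1 + s.a2, s.a3, s.t, s.q, s.p - s.a1 / s.q⟩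

/-- The Bäcklund transformation `w₂`, the reflection in the symmetry root `α₂`. -/
noncomputable def w2 (s : PV) : PV :=
  ⟨s.a0, s.a1 + s.a2, -s.a2, s.a2 + s.a3, s.t, s.q + s.a2 / s.p, s.p⟩

/-- The Bäcklund transformation `w₃`, the reflection in the symmetry root `α₃`. -/
noncomputable def w3 (s : PV) : PV :=
  ⟨s.a0 + s.a3, s.a1, s.a2 + s.a3, -s.a3, s.t, s.q, s.p - s.a3 / (s.q - 1)⟩

/-- The Dynkin diagram automorphism `σ₁ = (α₀α₃)(α₁α₂)`. -/
noncomputable def sigma1 (s : PV) : PV :=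
  ⟨s.a3, s.a2, s.a1, s.a0, -s.t, -s.p / s.t, s.q * s.t⟩

/-- The Dynkin diagram automorphism `σ₂ = (α₀α₂)`. -/
def sigma2 (s : PV) : PV :=
  ⟨s.a2, s.a1, s.a0, s.a3, -s.t, s.q, s.p + s.t⟩

/-- The Dynkin diagram automorphism `σ₃ = (α₁α₃)`. -/
def sigma3 (s : PV) : PV :=
  ⟨s.a0, s.a3, s.a2, s.a1, -s.t, 1 - s.q, -s.p⟩

/-- The denominator-nonvanishing condition for `w₀` at `s`: `p + t ≠ 0`. -/
def Def0 (s : PV) : Prop := s.p + s.t ≠ 0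

/-- The denominator-nonvanishing condition for `w₁` at `s`: `q ≠ 0`. -/
def Def1 (s : PV) : Prop := s.q ≠ 0

/-- The denominator-nonvanishing condition for `w₂` at `s`: `p ≠ 0`. -/
def Def2 (s : PV) : Prop := s.p ≠ 0

/-- The denominator-nonvanishing condition for `w₃` at `s`: `q − 1 ≠ 0`. -/
def Def3 (s : PV) : Prop := s.q - 1 ≠ 0

/-- The denominator-nonvanishing condition for `σ₁` at `s`: `t ≠ 0`. -/
def DefS1 (s : PV) : Prop := s.t ≠ 0

/-! Each `wᵢ` negates `aᵢ` and shifts one coordinate by `aᵢ / D`, where the denominator `D`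
is built from coordinates and parameters that `wᵢ` leaves fixed; applying `wᵢ` again shifts by
`-aᵢ / D`, undoing the first shift. -/

theorem w0_involutive : Function.Involutive w0 := by
  rintro ⟨a0, a1, a2, a3, t, q, p⟩
  simp only [w0, neg_neg, neg_add_cancel_left, neg_div, add_neg_cancel_right]

theorem w1_involutive : Function.Involutive w1 := by
  rintro ⟨a0, a1, a2, a3, t, q, p⟩
  simp only [w1, neg_neg, neg_add_cancel_left, neg_div, add_neg_cancel_right, sub_neg_eq_add,
    sub_add_cancel]

theorem w2_involutive : Function.Involutive w2 := by
  rintro ⟨a0, a1, a2, a3, t, q, p⟩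
  simp only [w2, neg_neg, neg_add_cancel_left, neg_div, add_neg_cancel_right]

theorem w3_involutive : Function.Involutive w3 := by
  rintro ⟨a0, a1, a2, a3, t, q, p⟩
  simp only [w3, neg_neg, neg_div, add_neg_cancel_right, sub_neg_eq_add, sub_add_cancel]

/-- Each of the birational maps `w₀, w₁, w₂, w₃` is an involution wherever
defined. -/
theorem w_involutions (s : PV) :
    (s.p + s.t ≠ 0 → w0 (w0 s) = s) ∧
    (s.q ≠ 0 → w1 (w1 s) = s) ∧
    (s.p ≠ 0 → w2 (w2 s) = s) ∧
    (s.q ≠ 1 → w3 (w3 s) = s) :=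
  ⟨fun _ => w0_involutive s, fun _ => w1_involutive s, fun _ => w2_involutive s,
    fun _ => w3_involutive s⟩
end

section
/- The birational maps w₀, w₁, w₂, w₃ satisfy the defining relations of the affine Weyl group W(A₃⁽¹⁾) encoded by the 4-cycle Dynkin diagram α₀–α₁–α₂–α₃–α₀, at every point of ℂ⁴×ℂ×ℂ² where all denominators occurring in both compositions are nonzero: the commutation relations w₀∘w₂ = w₂∘w₀ and w₁∘w₃ = w₃∘w₁, and the braid relations w₀∘w₁∘w₀ = w₁∘w₀∘w₁, w₁∘w₂∘w₁ = w₂∘w₁∘w₂, w₂∘w₃∘w₂ = w₃∘w₂∘w₃, and w₃∘w₀∘w₃ = w₀∘w₃∘w₀. -/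
/-!
In suitably shifted coordinates `Q ∈ {q, q - 1}`, `P ∈ {p + t, p}`, each `wᵢ` is a shear
`Q ↦ Q + a / P` or `P ↦ P - b / Q`. Two shears of the same coordinate commute outright, since each
shift depends only on the coordinate the other one fixes. For a pair of adjacent roots the
braid relation is the rank-two identity `shear_braid`: the `Q`-shear adds `a` to the product
`QP` and the `P`-shear subtracts `b`, so both triple compositions send `(Q, P)` to
`(Q (QP + a) / (QP - b), P (QP - b) / (QP + a))`.
-/

theorem shear_braid {K : Type*} [Field K] (a b Q P : K) (hP : P ≠ 0) (hQ : Q ≠ 0)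
    (hQ1 : Q + a / P ≠ 0) (hP1 : P - b / Q ≠ 0) :
    Q + a / P + b / (P - (a + b) / (Q + a / P)) = Q + (a + b) / (P - b / Q) ∧
      P - (a + b) / (Q + a / P) = P - b / Q - a / (Q + (a + b) / (P - b / Q)) := by
  have eQ1 : Q + a / P = (P * Q + a) / P := by field_simp
  have eP1 : P - b / Q = (P * Q - b) / Q := by field_simp
  have hA : P * Q + a ≠ 0 := (div_ne_zero_iff.mp (eQ1 ▸ hQ1)).1
  have hB : P * Q - b ≠ 0 := (div_ne_zero_iff.mp (eP1 ▸ hP1)).1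
  have eP2 : P - (a + b) / (Q + a / P) = P * (P * Q - b) / (P * Q + a) := by
    rw [eQ1, div_div_eq_mul_div, eq_div_iff hA, sub_mul, div_mul_cancel₀ _ hA]; ring
  have eQ2 : Q + (a + b) / (P - b / Q) = Q * (P * Q + a) / (P * Q - b) := by
    rw [eP1, div_div_eq_mul_div, eq_div_iff hB, add_mul, div_mul_cancel₀ _ hB]; ring
  rw [eP2, eQ2, eQ1, eP1]
  constructor <;> field_simp <;> ring

theorem w0_w2_comm (s : PV) : w0 (w2 s) = w2 (w0 s) := by
  simp only [w0, w2]
  congr 1 <;> ring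

theorem w1_w3_comm (s : PV) : w1 (w3 s) = w3 (w1 s) := by
  simp only [w1, w3]
  congr 1 <;> ring

theorem w0_w1_braid (s : PV) (h0 : Def0 s) (h1 : Def1 s) (h01 : Def1 (w0 s))
    (h10 : Def0 (w1 s)) : w0 (w1 (w0 s)) = w1 (w0 (w1 s)) := by
  obtain ⟨hq, hp⟩ := shear_braid s.a0 s.a1 s.q (s.p + s.t) h0 h1 h01
    (by simpa only [Def0, w1, sub_add_eq_add_sub] using h10)
  simp only [w0, w1]
  congr 1
  case e_q => linear_combination hq
  case e_p => linear_combination hp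
  all_goals ring

theorem w1_w2_braid (s : PV) (h1 : Def1 s) (h2 : Def2 s) (h12 : Def2 (w1 s))
    (h21 : Def1 (w2 s)) : w1 (w2 (w1 s)) = w2 (w1 (w2 s)) := by
  obtain ⟨hq, hp⟩ := shear_braid s.a2 s.a1 s.q s.p h2 h1 h21 h12
  simp only [w1, w2]
  congr 1
  case e_q => linear_combination -hq
  case e_p => linear_combination -hp
  all_goals ring

theorem w2_w3_braid (s : PV) (h2 : Def2 s) (h3 : Def3 s) (h23 : Def3 (w2 s))
    (h32 : Def2 (w3 s)) : w2 (w3 (w2 s)) = w3 (w2 (w3 s)) := by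
  obtain ⟨hq, hp⟩ := shear_braid s.a2 s.a3 (s.q - 1) s.p h2 h3
    (by simpa only [Def3, w2, sub_add_eq_add_sub] using h23) h32
  simp only [w2, w3]
  congr 1
  case e_q => linear_combination hq
  case e_p => linear_combination hp
  all_goals ring

theorem w3_w0_braid (s : PV) (h3 : Def3 s) (h0 : Def0 s) (h30 : Def0 (w3 s))
    (h03 : Def3 (w0 s)) : w3 (w0 (w3 s)) = w0 (w3 (w0 s)) := by
  obtain ⟨hq, hp⟩ := shear_braid s.a0 s.a3 (s.q - 1) (s.p + s.t) h0 h3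
    (by simpa only [Def3, w0, sub_add_eq_add_sub] using h03)
    (by simpa only [Def0, w3, sub_add_eq_add_sub] using h30)
  simp only [w3, w0]
  congr 1
  case e_q => linear_combination -hq
  case e_p => linear_combination -hp
  all_goals ring

/-- The birational maps `w₀, w₁, w₂, w₃` satisfy the defining relations of the
affine Weyl group `W(A₃⁽¹⁾)` encoded by the 4-cycle Dynkin diagram `α₀–α₁–α₂–α₃–α₀`, at every
point where all denominators occurring in both compositions are nonzero: the commutation
relations for the non-adjacent pairs and the braid relations for the adjacent pairs. -/
theorem w_affine_Weyl_relations (s : PV) :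
    -- commutation relation w₀∘w₂ = w₂∘w₀
    (Def2 s → Def0 (w2 s) → Def0 s → Def2 (w0 s) → w0 (w2 s) = w2 (w0 s)) ∧
    -- commutation relation w₁∘w₃ = w₃∘w₁
    (Def3 s → Def1 (w3 s) → Def1 s → Def3 (w1 s) → w1 (w3 s) = w3 (w1 s)) ∧
    -- braid relation w₀∘w₁∘w₀ = w₁∘w₀∘w₁
    (Def0 s → Def1 (w0 s) → Def0 (w1 (w0 s)) → Def1 s → Def0 (w1 s) → Def1 (w0 (w1 s)) →
      w0 (w1 (w0 s)) = w1 (w0 (w1 s))) ∧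
    -- braid relation w₁∘w₂∘w₁ = w₂∘w₁∘w₂
    (Def1 s → Def2 (w1 s) → Def1 (w2 (w1 s)) → Def2 s → Def1 (w2 s) → Def2 (w1 (w2 s)) →
      w1 (w2 (w1 s)) = w2 (w1 (w2 s))) ∧
    -- braid relation w₂∘w₃∘w₂ = w₃∘w₂∘w₃
    (Def2 s → Def3 (w2 s) → Def2 (w3 (w2 s)) → Def3 s → Def2 (w3 s) → Def3 (w2 (w3 s)) →
      w2 (w3 (w2 s)) = w3 (w2 (w3 s))) ∧
    -- braid relation w₃∘w₀∘w₃ = w₀∘w₃∘w₀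
    (Def3 s → Def0 (w3 s) → Def3 (w0 (w3 s)) → Def0 s → Def3 (w0 s) → Def0 (w3 (w0 s)) →
      w3 (w0 (w3 s)) = w0 (w3 (w0 s))) := by
  exact ⟨fun _ _ _ _ => w0_w2_comm s,
    fun _ _ _ _ => w1_w3_comm s,
    fun h0 h01 _ h1 h10 _ => w0_w1_braid s h0 h1 h01 h10,
    fun h1 h12 _ h2 h21 _ => w1_w2_braid s h1 h2 h12 h21,
    fun h2 h23 _ h3 h32 _ => w2_w3_braid s h2 h3 h23 h32,
    fun h3 h30 _ h0 h03 _ => w3_w0_braid s h3 h0 h30 h03⟩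
end

section
/- The birational maps σ₁, σ₂, σ₃ satisfy, at every point of ℂ⁴×ℂ×ℂ² where all denominators occurring in the relevant compositions are nonzero (in particular t ≠ 0 for σ₁): (i) σ₁∘σ₁, σ₂∘σ₂, σ₃∘σ₃ are the identity; and (ii) the semidirect-product relations σ₁∘w₀∘σ₁ = w₃, σ₁∘w₁∘σ₁ = w₂, σ₂∘w₀∘σ₂ = w₂, σ₂∘w₁∘σ₂ = w₁, σ₃∘w₁∘σ₃ = w₃, σ₃∘w₀∘σ₃ = w₀, corresponding to the permutations σ₁ = (α₀α₃)(α₁α₂), σ₂ = (α₀α₂), σ₃ = (α₁α₃) of the symmetry roots. -/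
/-! Each relation is a componentwise identity of rational functions. The root variables are
merely permuted and negated, and σ₂, σ₃ carry each denominator `p + t, q, p, q - 1` of the
reflections to plus or minus another one, so both sides contain literally the same quotient.
Only σ₁ rescales `(q, p)` by `t`, and undoing that rescaling is the one place where `t ≠ 0`
enters. -/

attribute [ext] PV

theorem sigma1_sigma1 {s : PV} (ht : s.t ≠ 0) : sigma1 (sigma1 s) = s := by
  ext
  case q | p => simp only [sigma1]; field_simp
  all_goals simp only [sigma1, neg_neg]

theorem sigma2_involutive : Function.Involutive sigma2 := by
  intro s
  ext <;> simp only [sigma2] <;> ring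

theorem sigma3_involutive : Function.Involutive sigma3 := by
  intro s
  ext <;> simp only [sigma3] <;> ring

theorem sigma1_w0_sigma1 {s : PV} (ht : s.t ≠ 0) : sigma1 (w0 (sigma1 s)) = w3 s := by
  ext
  case q => simp only [sigma1, w0, w3]; field_simp
  case p =>
    -- peel `t` off the denominator, so that cancelling it never requires `q ≠ 1`
    have hden : s.q * s.t + -s.t = s.t * (s.q - 1) := by ring
    simp only [sigma1, w0, w3, hden, div_mul_eq_div_div_swap]
    field_simp
    ring
  all_goals simp only [sigma1, w0, w3, add_comm, neg_neg]

theorem sigma1_w1_sigma1 {s : PV} (ht : s.t ≠ 0) : sigma1 (w1 (sigma1 s)) = w2 s := by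
  ext
  case q =>
    simp only [sigma1, w1, w2, div_div_eq_mul_div, div_neg]
    field_simp
    ring
  case p => simp only [sigma1, w1, w2]; field_simp
  all_goals simp only [sigma1, w1, w2, add_comm, neg_neg]

theorem sigma2_w0_sigma2 (s : PV) : sigma2 (w0 (sigma2 s)) = w2 s := by
  ext <;> simp only [sigma2, w0, w2, add_neg_cancel_right] <;> ring

theorem sigma2_w1_sigma2 (s : PV) : sigma2 (w1 (sigma2 s)) = w1 s := by
  ext <;> simp only [sigma2, w1] <;> ring

theorem sigma3_w1_sigma3 (s : PV) : sigma3 (w1 (sigma3 s)) = w3 s := by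
  have hden : 1 - s.q = -(s.q - 1) := by ring
  ext <;> simp only [sigma3, w1, w3, hden, div_neg] <;> ring

theorem sigma3_w0_sigma3 (s : PV) : sigma3 (w0 (sigma3 s)) = w0 s := by
  have hden : -s.p + -s.t = -(s.p + s.t) := by ring
  ext <;> simp only [sigma3, w0, hden, div_neg] <;> ring

/-- The Dynkin diagram automorphisms `σ₁, σ₂, σ₃` are involutions wherever
defined (in particular `t ≠ 0` is needed for `σ₁`), and they conjugate the reflections
`w₀, w₁, w₂, w₃` according to the permutations `σ₁ = (α₀α₃)(α₁α₂)`, `σ₂ = (α₀α₂)`,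
`σ₃ = (α₁α₃)` of the symmetry roots, at every point where all denominators occurring in the
relevant compositions are nonzero. -/
theorem sigma_relations (s : PV) :
    -- (i) involutions
    (s.t ≠ 0 → sigma1 (sigma1 s) = s) ∧
    (sigma2 (sigma2 s) = s) ∧
    (sigma3 (sigma3 s) = s) ∧
    -- (ii) σ₁∘w₀∘σ₁ = w₃
    (DefS1 s → Def0 (sigma1 s) → DefS1 (w0 (sigma1 s)) → Def3 s →
      sigma1 (w0 (sigma1 s)) = w3 s) ∧
    -- σ₁∘w₁∘σ₁ = w₂
    (DefS1 s → Def1 (sigma1 s) → DefS1 (w1 (sigma1 s)) → Def2 s →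
      sigma1 (w1 (sigma1 s)) = w2 s) ∧
    -- σ₂∘w₀∘σ₂ = w₂
    (Def0 (sigma2 s) → Def2 s → sigma2 (w0 (sigma2 s)) = w2 s) ∧
    -- σ₂∘w₁∘σ₂ = w₁
    (Def1 (sigma2 s) → Def1 s → sigma2 (w1 (sigma2 s)) = w1 s) ∧
    -- σ₃∘w₁∘σ₃ = w₃
    (Def1 (sigma3 s) → Def3 s → sigma3 (w1 (sigma3 s)) = w3 s) ∧
    -- σ₃∘w₀∘σ₃ = w₀
    (Def0 (sigma3 s) → Def0 s → sigma3 (w0 (sigma3 s)) = w0 s) :=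
  ⟨sigma1_sigma1, sigma2_involutive s, sigma3_involutive s,
    fun ht _ _ _ => sigma1_w0_sigma1 ht, fun ht _ _ _ => sigma1_w1_sigma1 ht,
    fun _ _ => sigma2_w0_sigma2 s, fun _ _ => sigma2_w1_sigma2 s,
    fun _ _ => sigma3_w1_sigma3 s, fun _ _ => sigma3_w0_sigma3 s⟩
end
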